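/- arXiv:2410.06337 — 3 statements merged into one kernel-verified Lean document; each statement's English description precedes it below -/
import Mathlib

section
/- If a graph G has a monopolar partition, then G has a monopolar partition V = C ⊎ I in which I is an inclusion-maximal independent set of G. -/
open SimpleGraph

variable {V : Type*}

def IsIndepSet (G : SimpleGraph V) (I : Set V) : Prop :=
  ∀ ⦃u v : V⦄, u ∈ I → v ∈ I → ¬ G.Adj u v

def IsClusterSet (G : SimpleGraph V) (C : Set V) : Prop :=
  ∀ ⦃u v w : V⦄, u ∈ C → v ∈ C → w ∈ C → G.Adj u v → G.Adj v w → u ≠ w → G.Adj u w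

def IsMonopolarPartition (G : SimpleGraph V) (C I : Set V) : Prop :=
  Disjoint C I ∧ C ∪ I = Set.univ ∧ IsClusterSet G C ∧ _root_.IsIndepSet G I

def openNbhd (G : SimpleGraph V) (S : Set V) : Set V :=
  {v | v ∉ S ∧ ∃ u ∈ S, G.Adj u v}

def IsChair (G : SimpleGraph V) (a b c d e : V) : Prop :=
  a ≠ b ∧ a ≠ c ∧ a ≠ d ∧ a ≠ e ∧ b ≠ c ∧ b ≠ d ∧ b ≠ e ∧ c ≠ d ∧ c ≠ e ∧ d ≠ e ∧
  G.Adj a b ∧ G.Adj b c ∧ G.Adj b d ∧ G.Adj d e ∧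
  ¬ G.Adj a c ∧ ¬ G.Adj a d ∧ ¬ G.Adj a e ∧ ¬ G.Adj c d ∧ ¬ G.Adj c e ∧ ¬ G.Adj b e

def ChairFreeAfter (G : SimpleGraph V) (X : Set V) : Prop :=
  ¬ ∃ a b c d e : V, a ∉ X ∧ b ∉ X ∧ c ∉ X ∧ d ∉ X ∧ e ∉ X ∧ IsChair G a b c d e

def IsClaw (G : SimpleGraph V) (u v w x : V) : Prop :=
  v ≠ w ∧ v ≠ x ∧ w ≠ x ∧
  G.Adj u v ∧ G.Adj u w ∧ G.Adj u x ∧ ¬ G.Adj v w ∧ ¬ G.Adj v x ∧ ¬ G.Adj w x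

def ClawFreeAfter (G : SimpleGraph V) (X : Set V) : Prop :=
  ¬ ∃ u v w x : V, u ∉ X ∧ v ∉ X ∧ w ∉ X ∧ x ∉ X ∧ IsClaw G u v w x

def IsInducedC4 (G : SimpleGraph V) (p q r s : V) : Prop :=
  p ≠ q ∧ p ≠ r ∧ p ≠ s ∧ q ≠ r ∧ q ≠ s ∧ r ≠ s ∧
  G.Adj p q ∧ G.Adj q r ∧ G.Adj r s ∧ G.Adj s p ∧ ¬ G.Adj p r ∧ ¬ G.Adj q s

def IsCBadP3 (G : SimpleGraph V) (C' : Set V) (u v w : V) : Prop :=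
  u ≠ w ∧ G.Adj u v ∧ G.Adj v w ∧ ¬ G.Adj u w ∧
  (∀ x : V, (x = u ∨ x = v ∨ x = w ∨ G.Adj u x ∨ G.Adj v x ∨ G.Adj w x) → x ∉ C') ∧
  (∀ p : V, (p = u ∨ p = v ∨ p = w) → ¬ ∃ x y : V, G.Adj p x ∧ G.Adj p y ∧ G.Adj x y) ∧
  (¬ ∃ x y : V, IsInducedC4 G u v x y) ∧ (¬ ∃ x y : V, IsInducedC4 G v w x y)

/-! Extend the independent side `I` of a monopolar partition to a maximal independent set `J`
by Zorn's lemma. The complement of `J` lies inside the old cluster side, and an induced subgraph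
of a cluster graph is again a cluster graph, so `(Jᶜ, J)` is the required partition. -/

theorem IsClusterSet.mono {G : SimpleGraph V} {C D : Set V} (hC : IsClusterSet G C)
    (hDC : D ⊆ C) : IsClusterSet G D :=
  fun _ _ _ hu hv hw => hC (hDC hu) (hDC hv) (hDC hw)

theorem isIndepSet_sUnion_of_isChain {G : SimpleGraph V} {c : Set (Set V)}
    (hc : IsChain (· ⊆ ·) c) (hind : ∀ s ∈ c, _root_.IsIndepSet G s) :
    _root_.IsIndepSet G (⋃₀ c) := by
  rintro u v ⟨s, hs, hus⟩ ⟨t, ht, hvt⟩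
  rcases hc.total hs ht with hst | hts
  · exact hind t ht (hst hus) hvt
  · exact hind s hs hus (hts hvt)

theorem exists_maximal_isIndepSet_superset {G : SimpleGraph V} {I : Set V}
    (hI : _root_.IsIndepSet G I) : ∃ J, I ⊆ J ∧ Maximal (_root_.IsIndepSet G) J :=
  zorn_subset_nonempty {S | _root_.IsIndepSet G S}
    (fun c hcS hc _ => ⟨⋃₀ c, isIndepSet_sUnion_of_isChain hc hcS,
      fun _ => Set.subset_sUnion_of_mem⟩) I hI

theorem IsMonopolarPartition.compl_of_superset {G : SimpleGraph V} {C I J : Set V}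
    (hCI : IsMonopolarPartition G C I) (hIJ : I ⊆ J) (hJ : _root_.IsIndepSet G J) :
    IsMonopolarPartition G Jᶜ J := by
  obtain ⟨-, hunion, hclus, -⟩ := hCI
  have hJC : Jᶜ ⊆ C :=
    (Set.compl_subset_compl.mpr hIJ).trans
      (Set.compl_subset_iff_union.mpr (Set.union_comm I C ▸ hunion))
  exact ⟨disjoint_compl_left, Set.compl_union_self J, hclus.mono hJC, hJ⟩

theorem stmt1 (G : SimpleGraph V) (h : ∃ C I : Set V, IsMonopolarPartition G C I) :
    ∃ C I : Set V, IsMonopolarPartition G C I ∧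
      ∀ x : V, x ∉ I → ¬ _root_.IsIndepSet G (insert x I) := by
  obtain ⟨C, I, hCI⟩ := h
  obtain ⟨J, hIJ, hJ⟩ := exists_maximal_isIndepSet_superset hCI.2.2.2
  exact ⟨Jᶜ, J, hCI.compl_of_superset hIJ hJ.prop,
    fun x hx => hJ.not_prop_of_ssuperset (Set.ssubset_insert hx)⟩
end

section
/- A graph G = (V,E) has a monopolar partition extending (C', I') if and only if I' is an independent set in G and the induced subgraph G − I' has a monopolar partition extending (C' ∪ N(I'), ∅), where N(I') is the open neighbourhood of I' in G. -/
open SimpleGraph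

variable {V : Type*}

/- Since the independent side I contains I', no neighbour of I' can lie in I, so N(I') is forced
into the cluster side; conversely, once N(I') lies in the cluster side, adding the independent set I'
to the independent side of G - I' creates no edge inside it. -/

section

variable {G : SimpleGraph V} {C I I' : Set V}

theorem IsIndepSet.mono (hI : _root_.IsIndepSet G I) (hI'I : I' ⊆ I) : _root_.IsIndepSet G I' :=
  fun _ _ hu hv ↦ hI (hI'I hu) (hI'I hv)

theorem IsMonopolarPartition.isCompl (h : IsMonopolarPartition G C I) : IsCompl C I :=
  ⟨h.1, codisjoint_iff.mpr h.2.1⟩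

theorem disjoint_openNbhd_of_subset (hI : _root_.IsIndepSet G I) (hI'I : I' ⊆ I) :
    Disjoint (openNbhd G I') I :=
  Set.disjoint_left.mpr fun _ ⟨_, _, hu, huv⟩ hv ↦ hI (hI'I hu) hv huv

theorem IsIndepSet.union (hI : _root_.IsIndepSet G I) (hI' : _root_.IsIndepSet G I')
    (hII' : Disjoint I I') (hN : Disjoint (openNbhd G I') I) : _root_.IsIndepSet G (I ∪ I') := by
  have cross : ∀ ⦃u v⦄, u ∈ I → v ∈ I' → ¬ G.Adj u v := fun u v hu hv huv ↦
    hN.ne_of_mem ⟨Set.disjoint_left.mp hII' hu, v, hv, huv.symm⟩ hu rfl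
  rintro u v (hu | hu) (hv | hv)
  exacts [hI hu hv, cross hu hv, fun huv ↦ cross hv hu huv.symm, hI' hu hv]

end

theorem stmt7_general (G : SimpleGraph V) (C' I' : Set V) :
    (∃ C I : Set V, IsMonopolarPartition G C I ∧ C' ⊆ C ∧ I' ⊆ I) ↔
    (_root_.IsIndepSet G I' ∧ ∃ C I : Set V, Disjoint C I ∧ C ∪ I = I'ᶜ ∧
      IsClusterSet G C ∧ _root_.IsIndepSet G I ∧ C' ∪ openNbhd G I' ⊆ C) := by
  constructor
  · rintro ⟨C, I, hpart, hC'C, hI'I⟩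
    have hC : C = Iᶜ := hpart.isCompl.eq_compl
    obtain ⟨hCI, -, hclus, hind⟩ := hpart
    refine ⟨hind.mono hI'I, C, I \ I', hCI.mono_right Set.sdiff_subset, ?_, hclus,
      hind.mono Set.sdiff_subset, Set.union_subset hC'C ?_⟩
    · rw [hC]
      ext v
      simp only [Set.mem_union, Set.mem_compl_iff, Set.mem_sdiff]
      have := @hI'I v
      tauto
    · rw [hC, Set.subset_compl_iff_disjoint_right]
      exact disjoint_openNbhd_of_subset hind hI'I
  · rintro ⟨hI', C, I, hCI, hCIc, hclus, hind, hsub⟩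
    obtain ⟨hC'C, hNC⟩ := Set.union_subset_iff.mp hsub
    have hCI' : Disjoint C I' := Set.subset_compl_iff_disjoint_right.mp (hCIc ▸ Set.subset_union_left)
    have hII' : Disjoint I I' := Set.subset_compl_iff_disjoint_right.mp (hCIc ▸ Set.subset_union_right)
    refine ⟨C, I ∪ I', ⟨Set.disjoint_union_right.mpr ⟨hCI, hCI'⟩, ?_, hclus,
      hind.union hI' hII' (hCI.mono_left hNC)⟩, hC'C, Set.subset_union_right⟩
    rw [← Set.union_assoc, hCIc, Set.compl_union_self]

theorem stmt7 (G : SimpleGraph V) (C' I' : Set V) (hdisj : Disjoint C' I') :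
    (∃ C I : Set V, IsMonopolarPartition G C I ∧ C' ⊆ C ∧ I' ⊆ I) ↔
    (_root_.IsIndepSet G I' ∧ ∃ C I : Set V, Disjoint C I ∧ C ∪ I = I'ᶜ ∧
      IsClusterSet G C ∧ _root_.IsIndepSet G I ∧ C' ∪ openNbhd G I' ⊆ C) :=
  stmt7_general G C' I'
end

section
/- Let G = (V,E) be a graph in which every vertex not in C' ⊆ V has degree at least 2, and suppose C' is a vertex modulator of G to chair-free graphs. If u,v,w is a C'-bad induced P3 in G (with middle vertex v), then v has degree exactly 2 in G. -/
open SimpleGraph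

variable {V : Type*}

/-! If the middle vertex `v` of a bad `P3` `u, v, w` had a third neighbour `z`, pick a neighbour
`s ≠ v` of `u`, which exists because `u ∉ C'` has degree at least two. No vertex of the `P3`
lies in a triangle and no edge of it lies in an induced `C4`, so `w, z, s` are pairwise
non-adjacent and `w, v, z, u, s` is a chair with centre `v`. All its vertices lie in the closed
neighbourhoods of `u, v, w`, hence outside `C'`, contradicting chair-freeness of `G - C'`. -/

theorem exists_adj_ne_of_two_le_degree [Fintype V] {G : SimpleGraph V} [DecidableRel G.Adj]
    {u : V} (h : 2 ≤ G.degree u) (v : V) : ∃ s, G.Adj u s ∧ s ≠ v := by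
  obtain ⟨s, hs, hsv⟩ := Finset.exists_mem_ne h v
  exact ⟨s, (G.mem_neighborFinset u s).1 hs, hsv⟩

namespace IsCBadP3

variable {G : SimpleGraph V} {C' : Set V} {u v w : V}

theorem adj_left_middle (h : IsCBadP3 G C' u v w) : G.Adj u v := h.2.1

theorem adj_middle_right (h : IsCBadP3 G C' u v w) : G.Adj v w := h.2.2.1

theorem left_notMem (h : IsCBadP3 G C' u v w) : u ∉ C' :=
  h.2.2.2.2.1 u (Or.inl rfl)

theorem notMem_of_adj_left (h : IsCBadP3 G C' u v w) {x : V} (hx : G.Adj u x) : x ∉ C' :=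
  h.2.2.2.2.1 x (by tauto)

theorem notMem_of_adj_middle (h : IsCBadP3 G C' u v w) {x : V} (hx : G.Adj v x) : x ∉ C' :=
  h.2.2.2.2.1 x (by tauto)

theorem not_adj_of_adj_left (h : IsCBadP3 G C' u v w) {x y : V} (hx : G.Adj u x)
    (hy : G.Adj u y) : ¬ G.Adj x y :=
  fun hxy => h.2.2.2.2.2.1 u (Or.inl rfl) ⟨x, y, hx, hy, hxy⟩

theorem not_adj_of_adj_middle (h : IsCBadP3 G C' u v w) {x y : V} (hx : G.Adj v x)
    (hy : G.Adj v y) : ¬ G.Adj x y :=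
  fun hxy => h.2.2.2.2.2.1 v (Or.inr (Or.inl rfl)) ⟨x, y, hx, hy, hxy⟩

theorem not_adj_of_adj_middle_of_adj_left (h : IsCBadP3 G C' u v w) {x s : V}
    (hx : G.Adj v x) (hxu : x ≠ u) (hs : G.Adj u s) (hsv : s ≠ v) : ¬ G.Adj x s := by
  intro hxs
  have hux : ¬ G.Adj u x := h.not_adj_of_adj_middle h.adj_left_middle.symm hx
  have hvs : ¬ G.Adj v s := h.not_adj_of_adj_left h.adj_left_middle hs
  exact h.2.2.2.2.2.2.1 ⟨x, s, h.adj_left_middle.ne, hxu.symm, hs.ne, hx.ne, hsv.symm, hxs.ne,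
    h.adj_left_middle, hx, hxs, hs.symm, hux, hvs⟩

theorem eq_or_eq_of_adj_middle (h : IsCBadP3 G C' u v w) [Fintype V] [DecidableRel G.Adj]
    (hdeg : 2 ≤ G.degree u) (hmod : ChairFreeAfter G C') {z : V} (hz : G.Adj v z) :
    z = u ∨ z = w := by
  have ⟨huw, huv, hvw, hnuw, _⟩ := h
  by_contra! ⟨hzu, hzw⟩
  obtain ⟨s, hus, hsv⟩ := exists_adj_ne_of_two_le_degree hdeg v
  have hzu' : ¬ G.Adj z u := h.not_adj_of_adj_middle hz huv.symm
  have hzw' : ¬ G.Adj z w := h.not_adj_of_adj_middle hz hvw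
  have hvs : ¬ G.Adj v s := h.not_adj_of_adj_left huv hus
  have hws : ¬ G.Adj w s := h.not_adj_of_adj_middle_of_adj_left hvw huw.symm hus hsv
  have hzs : ¬ G.Adj z s := h.not_adj_of_adj_middle_of_adj_left hz hzu hus hsv
  have hsw : s ≠ w := fun hsw => hnuw (hsw ▸ hus)
  have hsz : s ≠ z := fun hsz => hzu' (hsz ▸ hus).symm
  exact hmod ⟨w, v, z, u, s, h.notMem_of_adj_middle hvw, h.notMem_of_adj_left huv,
    h.notMem_of_adj_middle hz, h.notMem_of_adj_middle huv.symm, h.notMem_of_adj_left hus,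
    hvw.ne', hzw.symm, huw.symm, hsw.symm, hz.ne, huv.ne', hsv.symm, hzu, hsz.symm, hus.ne,
    hvw.symm, hz, huv.symm, hus, fun hwz => hzw' hwz.symm, fun hwu => hnuw hwu.symm, hws, hzu',
    hzs, hvs⟩

end IsCBadP3

theorem stmt10 [Fintype V] (G : SimpleGraph V) [DecidableRel G.Adj] (C' : Set V)
    (hdeg : ∀ v : V, v ∉ C' → 2 ≤ G.degree v)
    (hmod : ChairFreeAfter G C') (u v w : V) (hbad : IsCBadP3 G C' u v w) :
    G.degree v = 2 := by
  classical
  have hu : 2 ≤ G.degree u := hdeg u hbad.left_notMem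
  have hN : G.neighborFinset v = {u, w} := by
    ext z
    rw [mem_neighborFinset, Finset.mem_insert, Finset.mem_singleton]
    refine ⟨hbad.eq_or_eq_of_adj_middle hu hmod, ?_⟩
    rintro (rfl | rfl)
    exacts [hbad.adj_left_middle.symm, hbad.adj_middle_right]
  rw [← card_neighborFinset_eq_degree, hN, Finset.card_pair hbad.1]
end
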